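/- arXiv:1303.4354 — 5 statements merged into one kernel-verified Lean document; each statement's English description precedes it below -/
import Mathlib

section
/- Let a : ℝ³ → ℝ be radial (i.e., a(x) = a(y) whenever |x| = |y|) and Lipschitz with constant L (|a(x) − a(y)| ≤ L|x − y| for all x, y). Let j ≥ 1, let ω₁, …, ω_j ∈ ℝ³ be unit vectors, let t₁, …, t_j ∈ ℝ and x ∈ ℝ³, and set σ := 2 ω_j · (x + t₁ω₁ + ⋯ + t_{j−1}ω_{j−1}). Then |a(x) − a(x + t₁ω₁ + ⋯ + t_jω_j)| ≤ L ( |t₁| + ⋯ + |t_{j−1}| + |t_j + σ| ). -/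
/-!
Reflection in the plane `ω_jᗮ` preserves norms, so a radial `a` takes the same value at
`y + t_j ω_j` and at its mirror image `y - (t_j + σ) ω_j`, where
`y = x + t₁ω₁ + ⋯ + t_{j-1}ω_{j-1}` and `σ = 2⟪ω_j, y⟫`. The Lipschitz bound between `x` and
this mirror image, together with the triangle inequality, gives the estimate.
-/

open scoped RealInnerProductSpace

section NormedSpace

variable {E : Type*} [NormedAddCommGroup E]

theorem nonneg_of_abs_sub_le_mul_norm {a : E → ℝ} {L : ℝ}
    (hlip : ∀ x y : E, |a x - a y| ≤ L * ‖x - y‖) {v : E} (hv : v ≠ 0) : 0 ≤ L := by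
  have h := (abs_nonneg _).trans (hlip v 0)
  rw [sub_zero] at h
  exact nonneg_of_mul_nonneg_left h (norm_pos_iff.mpr hv)

theorem norm_sum_smul_le_sum_abs [NormedSpace ℝ E] {ι : Type*} (s : Finset ι) {ω : ι → E}
    (hω : ∀ i, ‖ω i‖ = 1) (t : ι → ℝ) : ‖∑ i ∈ s, t i • ω i‖ ≤ ∑ i ∈ s, |t i| :=
  (norm_sum_le _ _).trans_eq <| Finset.sum_congr rfl fun i _ => by
    rw [norm_smul, hω, mul_one, Real.norm_eq_abs]

end NormedSpace

section InnerProductSpace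

variable {E : Type*} [NormedAddCommGroup E] [InnerProductSpace ℝ E]

theorem reflection_orthogonalComplement_singleton_apply_of_norm_eq_one {u : E} (hu : ‖u‖ = 1)
    (z : E) : (ℝ ∙ u)ᗮ.reflection z = z - (2 * ⟪u, z⟫) • u := by
  rw [Submodule.reflection_orthogonal_apply, Submodule.reflection_singleton_apply, hu]
  simp only [Real.ringHom_apply, one_pow, div_one, neg_sub, two_mul, add_smul, two_nsmul]

theorem reflection_orthogonalComplement_singleton_add_smul {u : E} (hu : ‖u‖ = 1) (y : E)
    (s : ℝ) : (ℝ ∙ u)ᗮ.reflection (y + s • u) = y - (s + 2 * ⟪u, y⟫) • u := by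
  rw [reflection_orthogonalComplement_singleton_apply_of_norm_eq_one hu, inner_add_right,
    real_inner_smul_right, real_inner_self_eq_norm_sq, hu]
  module

theorem norm_add_smul_eq_norm_sub_smul {u : E} (hu : ‖u‖ = 1) (y : E) (s : ℝ) :
    ‖y + s • u‖ = ‖y - (s + 2 * ⟪u, y⟫) • u‖ := by
  rw [← reflection_orthogonalComplement_singleton_add_smul hu, LinearIsometryEquiv.norm_map]

theorem abs_sub_add_smul_le_of_radial_of_lipschitz {a : E → ℝ} {L : ℝ}
    (hrad : ∀ x y : E, ‖x‖ = ‖y‖ → a x = a y) (hlip : ∀ x y : E, |a x - a y| ≤ L * ‖x - y‖)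
    {u : E} (hu : ‖u‖ = 1) (x y : E) (s : ℝ) :
    |a x - a (y + s • u)| ≤ L * (‖x - y‖ + |s + 2 * ⟪u, y⟫|) := by
  have hL : 0 ≤ L := nonneg_of_abs_sub_le_mul_norm hlip (norm_ne_zero_iff.mp (hu ▸ one_ne_zero))
  rw [hrad _ _ (norm_add_smul_eq_norm_sub_smul hu y s)]
  calc |a x - a (y - (s + 2 * ⟪u, y⟫) • u)|
      ≤ L * ‖x - y + (s + 2 * ⟪u, y⟫) • u‖ := (hlip _ _).trans_eq (by rw [← sub_add])
    _ ≤ L * (‖x - y‖ + |s + 2 * ⟪u, y⟫|) := by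
      gcongr
      exact (norm_add_le _ _).trans_eq (by rw [norm_smul, hu, mul_one, Real.norm_eq_abs])

end InnerProductSpace

/-- The geometric inequality from Step 1 of the proof of Theorem 3.4: a radial Lipschitz
function is insensitive to the reflection `z ↦ z − 2(z·ω)ω`, so the increment along
`t₁ω₁ + ⋯ + t_jω_j` is controlled by `|t₁| + ⋯ + |t_{j−1}| + |t_j + σ|` with
`σ = 2 ω_j · (x + t₁ω₁ + ⋯ + t_{j−1}ω_{j−1})`.  (Here the number of directions is `j + 1 ≥ 1`,
with `ω_{j+1} = ω (Fin.last j)`.) -/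
theorem radial_lipschitz_reflection_increment
    (a : EuclideanSpace ℝ (Fin 3) → ℝ) (L : ℝ)
    (hrad : ∀ x y : EuclideanSpace ℝ (Fin 3), ‖x‖ = ‖y‖ → a x = a y)
    (hlip : ∀ x y : EuclideanSpace ℝ (Fin 3), |a x - a y| ≤ L * ‖x - y‖)
    (j : ℕ)
    (ω : Fin (j + 1) → EuclideanSpace ℝ (Fin 3)) (hω : ∀ i, ‖ω i‖ = 1)
    (t : Fin (j + 1) → ℝ) (x : EuclideanSpace ℝ (Fin 3)) :
    |a x - a (x + ∑ i : Fin (j + 1), t i • ω i)|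
      ≤ L * ((∑ i : Fin j, |t i.castSucc|) +
          |t (Fin.last j) +
            2 * ⟪ω (Fin.last j), x + ∑ i : Fin j, t i.castSucc • ω i.castSucc⟫|) := by
  set y := x + ∑ i : Fin j, t i.castSucc • ω i.castSucc
  have hsplit : x + ∑ i : Fin (j + 1), t i • ω i = y + t (Fin.last j) • ω (Fin.last j) := by
    rw [Fin.sum_univ_castSucc, add_assoc]
  have hxy : ‖x - y‖ ≤ ∑ i : Fin j, |t i.castSucc| := by
    rw [sub_add_cancel_left, norm_neg]
    exact norm_sum_smul_le_sum_abs _ (fun _ => hω _) _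
  have hL : 0 ≤ L := 
    nonneg_of_abs_sub_le_mul_norm hlip (norm_ne_zero_iff.mp (hω 0 ▸ one_ne_zero))
  rw [hsplit]
  refine (abs_sub_add_smul_le_of_radial_of_lipschitz hrad hlip (hω _) x y _).trans ?_
  gcongr
end

section
/- For every p with 1 < p < 6/5 there is a constant C_p such that for every u ∈ ℝ, every h₁ ∈ L^∞(ℝ) and every h₂ ∈ L²(ℝ): ∫_ℝ |t|^{2−2p} (1 + |t+u|²)^{−p/2} |h₁(t+u) + h₂(t+u)|^p dt ≤ C_p ( ‖h₁‖_{L^∞(ℝ)}^p + ‖h₂‖_{L²(ℝ)}^p ). -/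
/-!
Split `‖h₁ + h₂‖ ^ p ≤ 2 ^ (p - 1) (‖h₁‖ ^ p + ‖h₂‖ ^ p)`. The weight
`w_u(t) = |t| ^ a ⟨t + u⟩ ^ (-b)` with `-1 < a ≤ 0` and `b > 1` has `∫ w_u` bounded uniformly
in `u`, because `w_u ≤ 1_{|t| ≤ 1} |t| ^ a + ⟨t + u⟩ ^ (-b)` and the second term integrates to
the same value for every `u`. The `L^∞` part is then at most `(∫ w_u) ‖h₁‖_∞ ^ p`. For the `L²`
part, Hölder with the exponents `r = 2 / (2 - p)` and `2 / p` gives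
`(∫ w_u ^ r) ^ (1 / r) ‖h₂‖₂ ^ p`, and `w_u ^ r` is a weight of the same kind as long as
`(2 - 2p) r > -1`, that is `p < 6/5`.
-/

open MeasureTheory Real Metric Module
open scoped ENNReal NNReal

section Translation

variable {G : Type*} [MeasurableSpace G] [AddGroup G] [MeasurableAdd G] {μ : Measure G}
  [μ.IsAddRightInvariant]

theorem lintegral_mul_comp_add_right_le {f g : G → ℝ≥0∞} {s : Set G} (hs : MeasurableSet s)
    (hf : ∀ x ∉ s, f x ≤ 1) (hg : ∀ x, g x ≤ 1) (hgm : Measurable g) (u : G) :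
    ∫⁻ x, f x * g (x + u) ∂μ ≤ ∫⁻ x in s, f x ∂μ + ∫⁻ x, g x ∂μ := by
  have hpt : ∀ x, f x * g (x + u) ≤ s.indicator f x + g (x + u) := by
    intro x
    by_cases hx : x ∈ s
    · rw [Set.indicator_of_mem hx]
      exact (mul_le_of_le_one_right' (hg _)).trans le_self_add
    · exact (mul_le_of_le_one_left' (hf x hx)).trans le_add_self
  calc ∫⁻ x, f x * g (x + u) ∂μ ≤ ∫⁻ x, s.indicator f x + g (x + u) ∂μ := lintegral_mono hpt
    _ = ∫⁻ x in s, f x ∂μ + ∫⁻ x, g x ∂μ := by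
      rw [lintegral_add_right (g := fun x => g (x + u)) _ (hgm.comp (measurable_add_const u)),
        lintegral_indicator hs, lintegral_add_right_eq_self]

theorem eLpNorm_comp_add_right {F : Type*} [NormedAddCommGroup F] (h : G → F) (u : G)
    (q : ℝ≥0∞) : eLpNorm (fun x => h (x + u)) q μ = eLpNorm h q μ := by
  have := (MeasurableEquiv.addRight u).measurableEmbedding.eLpNorm_map_measure (g := h) (p := q)
    (μ := μ)
  rwa [MeasurableEquiv.coe_addRight, map_add_right_eq_self, eq_comm] at this

end Translation

section WeightedLp

variable {α F : Type*} [MeasurableSpace α] {μ : Measure α} [NormedAddCommGroup F]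
  {w : α → ℝ≥0∞}

theorem lintegral_mul_enorm_add_rpow_le {p : ℝ} (hp : 1 ≤ p) (hw : AEMeasurable w μ)
    {f g : α → F} (hf : AEStronglyMeasurable f μ) :
    ∫⁻ x, w x * ‖f x + g x‖ₑ ^ p ∂μ ≤
      2 ^ (p - 1) * (∫⁻ x, w x * ‖f x‖ₑ ^ p ∂μ + ∫⁻ x, w x * ‖g x‖ₑ ^ p ∂μ) := by
  have hpt : ∀ x, w x * ‖f x + g x‖ₑ ^ p ≤
      2 ^ (p - 1) * (w x * ‖f x‖ₑ ^ p + w x * ‖g x‖ₑ ^ p) := fun x =>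
    calc w x * ‖f x + g x‖ₑ ^ p ≤ w x * (‖f x‖ₑ + ‖g x‖ₑ) ^ p := by
          gcongr; exact enorm_add_le _ _
      _ ≤ w x * (2 ^ (p - 1) * (‖f x‖ₑ ^ p + ‖g x‖ₑ ^ p)) := by
          gcongr; exact ENNReal.rpow_add_le_mul_rpow_add_rpow _ _ hp
      _ = _ := by ring
  calc ∫⁻ x, w x * ‖f x + g x‖ₑ ^ p ∂μ
      ≤ ∫⁻ x, 2 ^ (p - 1) * (w x * ‖f x‖ₑ ^ p + w x * ‖g x‖ₑ ^ p) ∂μ := lintegral_mono hpt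
    _ = _ := by
      rw [lintegral_const_mul' _ _
          (ENNReal.rpow_ne_top_of_nonneg (by linarith) ENNReal.ofNat_ne_top),
        lintegral_add_left' (f := fun x => w x * ‖f x‖ₑ ^ p) (hw.mul (hf.enorm.pow_const p))]

theorem lintegral_mul_enorm_rpow_le_mul_eLpNorm_top {p : ℝ} (hp : 0 ≤ p) (hw : AEMeasurable w μ)
    (h : α → F) :
    ∫⁻ x, w x * ‖h x‖ₑ ^ p ∂μ ≤ (∫⁻ x, w x ∂μ) * eLpNorm h ∞ μ ^ p := by
  calc ∫⁻ x, w x * ‖h x‖ₑ ^ p ∂μ ≤ ∫⁻ x, w x * eLpNorm h ∞ μ ^ p ∂μ := by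
        refine lintegral_mono_ae ((ae_le_eLpNormEssSup (f := h)).mono fun x hx => ?_)
        gcongr; rwa [eLpNorm_exponent_top]
    _ = _ := lintegral_mul_const'' _ hw

theorem lintegral_mul_enorm_rpow_le_lintegral_rpow_mul_eLpNorm {p q r : ℝ} (hp : 0 < p)
    (hpq : r.HolderConjugate (q / p)) (hw : AEMeasurable w μ) {h : α → F}
    (hh : AEStronglyMeasurable h μ) :
    ∫⁻ x, w x * ‖h x‖ₑ ^ p ∂μ ≤
      (∫⁻ x, w x ^ r ∂μ) ^ (1 / r) * eLpNorm h (ENNReal.ofReal q) μ ^ p := by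
  have hq : 0 < q := by
    have := hpq.symm.lt; rw [one_lt_div hp] at this; linarith
  have hpow : ∀ x, (‖h x‖ₑ ^ p) ^ (q / p) = ‖h x‖ₑ ^ q := fun x => by
    rw [← ENNReal.rpow_mul, mul_div_cancel₀ _ hp.ne']
  have hnorm : eLpNorm h (ENNReal.ofReal q) μ ^ p = (∫⁻ x, ‖h x‖ₑ ^ q ∂μ) ^ (1 / (q / p)) := by
    rw [eLpNorm_eq_lintegral_rpow_enorm_toReal (by simpa using hq) ENNReal.ofReal_ne_top,
      ENNReal.toReal_ofReal hq.le, ← ENNReal.rpow_mul, one_div_div, one_div_mul_eq_div]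
  rw [hnorm, ← lintegral_congr hpow]
  exact ENNReal.lintegral_mul_le_Lp_mul_Lq μ hpq hw (hh.enorm.pow_const p)

theorem lintegral_mul_enorm_add_rpow_le_of_holderConjugate {p q r : ℝ} (hp : 1 ≤ p)
    (hpq : r.HolderConjugate (q / p)) (hw : AEMeasurable w μ) {f g : α → F}
    (hf : AEStronglyMeasurable f μ) (hg : AEStronglyMeasurable g μ) :
    ∫⁻ x, w x * ‖f x + g x‖ₑ ^ p ∂μ ≤ 2 ^ (p - 1) * ((∫⁻ x, w x ∂μ) * eLpNorm f ∞ μ ^ p +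
      (∫⁻ x, w x ^ r ∂μ) ^ (1 / r) * eLpNorm g (ENNReal.ofReal q) μ ^ p) := by
  refine (lintegral_mul_enorm_add_rpow_le hp hw hf).trans ?_
  gcongr
  · exact lintegral_mul_enorm_rpow_le_mul_eLpNorm_top (by linarith) hw f
  · exact lintegral_mul_enorm_rpow_le_lintegral_rpow_mul_eLpNorm (by linarith) hpq hw hg

end WeightedLp

section Weight

variable {E : Type*} [NormedAddCommGroup E]

noncomputable def shiftedWeight (a b : ℝ) (u x : E) : ℝ≥0∞ :=
  ENNReal.ofReal (‖x‖ ^ a) * ENNReal.ofReal ((1 + ‖x + u‖ ^ 2) ^ (-(b / 2)))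

theorem shiftedWeight_rpow (a b : ℝ) (u x : E) {r : ℝ} (hr : 0 ≤ r) :
    shiftedWeight a b u x ^ r = shiftedWeight (a * r) (b * r) u x := by
  have hbr : -(b * r / 2) = -(b / 2) * r := by ring
  rw [shiftedWeight, shiftedWeight, ENNReal.mul_rpow_of_nonneg _ _ hr,
    ENNReal.ofReal_rpow_of_nonneg (by positivity) hr,
    ENNReal.ofReal_rpow_of_nonneg (by positivity) hr, ← Real.rpow_mul (norm_nonneg x),
    ← Real.rpow_mul (by positivity), hbr]

variable [MeasurableSpace E] [BorelSpace E]

theorem measurable_shiftedWeight (a b : ℝ) (u : E) : Measurable (shiftedWeight a b u) := by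
  unfold shiftedWeight; fun_prop

variable [NormedSpace ℝ E] [FiniteDimensional ℝ E] {μ : Measure E} [μ.IsAddHaarMeasure]

theorem lintegral_closedBall_norm_rpow_lt_top (hd : 1 ≤ finrank ℝ E) {a : ℝ}
    (ha : -(finrank ℝ E : ℝ) < a) :
    ∫⁻ x in closedBall 0 1, ENNReal.ofReal (‖x‖ ^ a) ∂μ < ⊤ := by
  have hloc : LocallyIntegrable (fun x : E => ‖x‖ ^ a) μ :=
    locallyIntegrable_of_norm_le_rpow (C := 1) (α := -a) hd (by linarith)
      (Filter.Eventually.of_forall fun x => by simp [abs_of_nonneg, Real.rpow_nonneg])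
      (measurable_norm.pow_const a).aestronglyMeasurable
  exact (hloc.integrableOn_isCompact (isCompact_closedBall 0 1)).lintegral_lt_top

theorem exists_lintegral_shiftedWeight_le {a b : ℝ} (ha₀ : -(finrank ℝ E : ℝ) < a) (ha : a ≤ 0)
    (hb : (finrank ℝ E : ℝ) < b) :
    ∃ C : ℝ≥0, ∀ u : E, ∫⁻ x, shiftedWeight a b u x ∂μ ≤ C := by
  have hd : 1 ≤ finrank ℝ E := by exact_mod_cast (show (0 : ℝ) < finrank ℝ E by linarith)
  set K := ∫⁻ x in closedBall 0 1, ENNReal.ofReal (‖x‖ ^ a) ∂μ +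
    ∫⁻ x, ENNReal.ofReal ((1 + ‖x‖ ^ 2) ^ (-(b / 2))) ∂μ
  have hK : K ≠ ⊤ := by
    refine ENNReal.add_ne_top.2 ⟨(lintegral_closedBall_norm_rpow_lt_top hd ha₀).ne, ?_⟩
    simpa only [neg_div] using
      (integrable_rpow_neg_one_add_norm_sq (μ := μ) hb).lintegral_lt_top.ne
  refine ⟨K.toNNReal, fun u => ?_⟩
  rw [ENNReal.coe_toNNReal hK]
  refine lintegral_mul_comp_add_right_le measurableSet_closedBall (fun x hx => ?_)
    (fun x => ?_) (by fun_prop) u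
  · rw [mem_closedBall_zero_iff, not_le] at hx
    exact ENNReal.ofReal_le_one.2 (Real.rpow_le_one_of_one_le_of_nonpos hx.le ha)
  · exact ENNReal.ofReal_le_one.2
      (Real.rpow_le_one_of_one_le_of_nonpos (by nlinarith [sq_nonneg ‖x‖]) (by linarith))

theorem exists_lintegral_shiftedWeight_mul_enorm_add_rpow_le {F : Type*} [NormedAddCommGroup F]
    {a b p q r : ℝ} (hp : 1 ≤ p) (hpq : r.HolderConjugate (q / p))
    (ha₀ : -(finrank ℝ E : ℝ) < a) (ha : a ≤ 0) (hb : (finrank ℝ E : ℝ) < b)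
    (har : -(finrank ℝ E : ℝ) < a * r) (hbr : (finrank ℝ E : ℝ) < b * r) :
    ∃ C : ℝ≥0, ∀ (u : E) (f g : E → F), AEStronglyMeasurable f μ → AEStronglyMeasurable g μ →
      ∫⁻ x, shiftedWeight a b u x * ‖f (x + u) + g (x + u)‖ₑ ^ p ∂μ ≤
        C * (eLpNorm f ∞ μ ^ p + eLpNorm g (ENNReal.ofReal q) μ ^ p) := by
  obtain ⟨C₁, hC₁⟩ := exists_lintegral_shiftedWeight_le (μ := μ) ha₀ ha hb
  obtain ⟨C₂, hC₂⟩ := exists_lintegral_shiftedWeight_le (μ := μ) har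
    (mul_nonpos_of_nonpos_of_nonneg ha hpq.nonneg) hbr
  refine ⟨2 ^ (p - 1) * (C₁ + C₂ ^ (1 / r)), fun u f g hf hg => ?_⟩
  have hshift := measurePreserving_add_right μ u
  have key := lintegral_mul_enorm_add_rpow_le_of_holderConjugate (f := fun x => f (x + u))
    (g := fun x => g (x + u)) hp hpq (measurable_shiftedWeight a b u).aemeasurable
    (hf.comp_measurePreserving hshift) (hg.comp_measurePreserving hshift)
  simp only [eLpNorm_comp_add_right, shiftedWeight_rpow _ _ _ _ hpq.nonneg] at key
  refine key.trans ?_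
  push_cast [ENNReal.coe_rpow_of_nonneg _ hpq.one_div_nonneg,
    ENNReal.coe_rpow_of_nonneg _ (sub_nonneg.2 hp)]
  rw [mul_assoc]
  gcongr
  calc _ ≤ C₁ * eLpNorm f ∞ μ ^ p +
        (C₂ : ℝ≥0∞) ^ (1 / r) * eLpNorm g (ENNReal.ofReal q) μ ^ p := by
        gcongr
        exacts [hC₁ u, hpq.one_div_nonneg, hC₂ u]
    _ ≤ _ := by
        rw [mul_add]
        gcongr
        exacts [le_self_add, le_add_self]

end Weight

/-- The one-dimensional weighted estimate, uniform in the shift `u`, at the core of the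
bound for the term (3.42) in the proof of Theorem 3.4. -/
theorem weighted_shift_estimate (p : ℝ) (hp1 : 1 < p) (hp2 : p < 6 / 5) :
    ∃ C : ℝ, 0 < C ∧
      ∀ (u : ℝ) (h₁ h₂ : ℝ → ℂ),
        MemLp h₁ ∞ volume → MemLp h₂ 2 volume →
        (∫⁻ t : ℝ, ENNReal.ofReal (|t| ^ (2 - 2 * p)) *
            ENNReal.ofReal ((1 + |t + u| ^ 2) ^ (-(p / 2))) *
            (‖h₁ (t + u) + h₂ (t + u)‖₊ : ℝ≥0∞) ^ p ∂volume)
          ≤ ENNReal.ofReal C *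
            ((eLpNorm h₁ ∞ volume) ^ p + (eLpNorm h₂ 2 volume) ^ p) := by
  have hp : 0 < 1 - p / 2 := by linarith
  have hpq : (1 - p / 2)⁻¹.HolderConjugate (2 / p) := by
    simpa only [inv_div] using Real.HolderConjugate.one_sub_inv_inv (a := p / 2) (by linarith)
      (by linarith)
  obtain ⟨C, hC⟩ := exists_lintegral_shiftedWeight_mul_enorm_add_rpow_le (E := ℝ) (μ := volume)
    (F := ℂ) (a := 2 - 2 * p) (b := p) (q := 2) hp1.le hpq
    (by rw [finrank_self, Nat.cast_one]; linarith) (by linarith)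
    (by rwa [finrank_self, Nat.cast_one])
    (by rw [finrank_self, Nat.cast_one, ← div_eq_mul_inv, lt_div_iff₀ hp]; linarith)
    (by rw [finrank_self, Nat.cast_one, ← div_eq_mul_inv, lt_div_iff₀ hp]; linarith)
  refine ⟨C + 1, by positivity, fun u h₁ h₂ hh₁ hh₂ => ?_⟩
  calc _ = ∫⁻ t, shiftedWeight (2 - 2 * p) p u t * ‖h₁ (t + u) + h₂ (t + u)‖ₑ ^ p := by
        simp only [shiftedWeight, Real.norm_eq_abs, enorm_eq_nnnorm]
    _ ≤ C * (eLpNorm h₁ ∞ volume ^ p + eLpNorm h₂ 2 volume ^ p) := by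
        simpa only [ENNReal.ofReal_ofNat] using hC u h₁ h₂ hh₁.1 hh₂.1
    _ ≤ _ := by
        rw [← ENNReal.ofReal_coe_nnreal]
        gcongr
        linarith
end

section
/- For every p with 1 < p < 6/5, sup_{y ∈ ℝ³} ∫_{ℝ³} (1 + ||x| − |y||²)^{−p} (1 + |x|²)^{−p/2} (1 + |y|²)^{−p/2} dx < ∞. Equivalently, with K₁(x,y) := ⟨|x| − |y|⟩^{−2} ⟨x⟩^{−1} ⟨y⟩^{−1}, one has sup_{y ∈ ℝ³} ‖K₁(·, y)‖_{L^p(ℝ³)} < ∞. -/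
open MeasureTheory Real Set Metric
open scoped ENNReal NNReal

/-- Pointwise radial estimate: with `A = ⟨r−R⟩², B = ⟨r⟩², C = ⟨R⟩²`, one has
`r² A^{-p} B^{-p/2} C^{-p/2} ≤ 2 A^{-p/2}` for `1 ≤ p ≤ 2`. -/
private lemma kernelK1_key_pointwise (p r R : ℝ) (hp1 : 1 ≤ p) (hp2 : p ≤ 2) :
    r ^ 2 * ((1 + (r - R) ^ 2) ^ (-p) * (1 + r ^ 2) ^ (-(p / 2)) *
      (1 + R ^ 2) ^ (-(p / 2))) ≤ 2 * (1 + (r - R) ^ 2) ^ (-(p / 2)) := by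
  set A := 1 + (r - R) ^ 2 with hAdef
  set B := 1 + r ^ 2 with hBdef
  set C := 1 + R ^ 2 with hCdef
  have hA1 : 1 ≤ A := by nlinarith [sq_nonneg (r - R)]
  have hB1 : 1 ≤ B := by nlinarith [sq_nonneg r]
  have hC1 : 1 ≤ C := by nlinarith [sq_nonneg R]
  have hA0 : (0:ℝ) < A := lt_of_lt_of_le one_pos hA1
  have hB0 : (0:ℝ) < B := lt_of_lt_of_le one_pos hB1
  have hC0 : (0:ℝ) < C := lt_of_lt_of_le one_pos hC1
  have h1 : r ^ 2 ≤ B := by nlinarith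
  have h2 : B ≤ 2 * A * C := by nlinarith [sq_nonneg (r - 2*R), sq_nonneg ((r - R)*R)]
  have hexp : (0:ℝ) ≤ 1 - p/2 := by linarith
  calc r ^ 2 * (A ^ (-p) * B ^ (-(p / 2)) * C ^ (-(p / 2)))
      ≤ B * (A ^ (-p) * B ^ (-(p / 2)) * C ^ (-(p / 2))) := by
        apply mul_le_mul_of_nonneg_right h1
        positivity
    _ = A ^ (-p) * (B ^ (1 - p/2)) * C ^ (-(p / 2)) := by
        rw [show (1:ℝ) - p/2 = 1 + -(p/2) by ring, Real.rpow_add hB0, Real.rpow_one]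
        ring
    _ ≤ A ^ (-p) * ((2*A*C) ^ (1 - p/2)) * C ^ (-(p / 2)) := by
        have := Real.rpow_le_rpow hB0.le h2 hexp
        have hAn : (0:ℝ) ≤ A ^ (-p) := Real.rpow_nonneg hA0.le _
        have hCn : (0:ℝ) ≤ C ^ (-(p/2)) := Real.rpow_nonneg hC0.le _
        apply mul_le_mul_of_nonneg_right _ hCn
        exact mul_le_mul_of_nonneg_left this hAn
    _ = (2:ℝ) ^ (1 - p/2) * (A ^ (-p + (1 - p/2))) * (C ^ ((1 - p/2) + -(p / 2))) := by
        rw [Real.mul_rpow (by positivity) hC0.le, Real.mul_rpow (by norm_num) hA0.le,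
          Real.rpow_add hA0, Real.rpow_add hC0]
        ring
    _ ≤ 2 * A ^ (-(p/2)) * 1 := by
        have e1 : (2:ℝ) ^ (1 - p/2) ≤ 2 :=
          calc (2:ℝ) ^ (1 - p/2) ≤ (2:ℝ) ^ (1:ℝ) :=
                Real.rpow_le_rpow_of_exponent_le one_le_two (by linarith)
            _ = 2 := Real.rpow_one 2
        have e2 : A ^ (-p + (1 - p/2)) ≤ A ^ (-(p/2)) :=
          Real.rpow_le_rpow_of_exponent_le hA1 (by linarith)
        have e3 : C ^ ((1 - p/2) + -(p/2)) ≤ 1 :=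
          Real.rpow_le_one_of_one_le_of_nonpos hC1 (by linarith)
        have h2A : (0:ℝ) ≤ 2 * A ^ (-(p/2)) := by positivity
        exact mul_le_mul (mul_le_mul e1 e2 (Real.rpow_nonneg hA0.le _) (by norm_num))
          e3 (Real.rpow_nonneg hC0.le _) h2A
    _ = 2 * A ^ (-(p/2)) := mul_one _

private lemma kernelK1_polar (g : ℝ → ℝ≥0∞) (hg : Measurable g) :
    ∫⁻ x : EuclideanSpace ℝ (Fin 3), g ‖x‖ ∂volume =
      (volume : Measure (EuclideanSpace ℝ (Fin 3))).toSphere univ *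
        ∫⁻ r in Ioi (0:ℝ), ENNReal.ofReal (r ^ 2) * g r ∂volume := by
  set E := EuclideanSpace ℝ (Fin 3)
  set μ : Measure E := volume
  have hdim : Module.finrank ℝ E - 1 = 2 := by
    simp [E, finrank_euclideanSpace]
  have hmeas : Measurable fun z : sphere (0:E) 1 × Ioi (0:ℝ) => g z.2 :=
    hg.comp (measurable_subtype_coe.comp measurable_snd)
  have hmeas2 : Measurable fun r : Ioi (0:ℝ) => g r := hg.comp measurable_subtype_coe
  calc ∫⁻ x : E, g ‖x‖ ∂μ
      = ∫⁻ x in ({0}ᶜ : Set E), g ‖x‖ ∂μ := by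
        rw [restrict_compl_singleton]
    _ = ∫⁻ x : ({0}ᶜ : Set E), g ‖(x:E)‖ ∂(μ.comap (↑)) :=
        (lintegral_subtype_comap (measurableSet_singleton 0).compl _).symm
    _ = ∫⁻ z : sphere (0:E) 1 × Ioi (0:ℝ), g z.2
          ∂(μ.toSphere.prod (Measure.volumeIoiPow (Module.finrank ℝ E - 1))) := by
        rw [← μ.measurePreserving_homeomorphUnitSphereProd.lintegral_comp hmeas]
        apply lintegral_congr
        intro x
        simp
    _ = μ.toSphere univ * ∫⁻ r : Ioi (0:ℝ), g r ∂(Measure.volumeIoiPow 2) := by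
        rw [hdim, lintegral_prod _ hmeas.aemeasurable]
        simp [lintegral_const, mul_comm]
    _ = μ.toSphere univ * ∫⁻ r in Ioi (0:ℝ), ENNReal.ofReal (r ^ 2) * g r ∂volume := by
        congr 1
        rw [Measure.volumeIoiPow,
          lintegral_withDensity_eq_lintegral_mul _ (by fun_prop) hmeas2]
        rw [← lintegral_subtype_comap measurableSet_Ioi
          (fun r => ENNReal.ofReal (r ^ 2) * g r)]
        rfl

/-- Estimate (3.47) for the kernel `K₁(x,y) = ⟨|x|−|y|⟩⁻² ⟨x⟩⁻¹ ⟨y⟩⁻¹`: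
its `L^p(ℝ³)` norm in `x` is bounded uniformly in `y`, for `1 < p < 6/5`. -/
theorem kernel_K1_uniform_Lp_bound (p : ℝ) (hp1 : 1 < p) (hp2 : p < 6 / 5) :
    (⨆ y : EuclideanSpace ℝ (Fin 3),
      ∫⁻ x : EuclideanSpace ℝ (Fin 3),
        ENNReal.ofReal ((1 + (‖x‖ - ‖y‖) ^ 2) ^ (-p) *
          (1 + ‖x‖ ^ 2) ^ (-(p / 2)) * (1 + ‖y‖ ^ 2) ^ (-(p / 2))) ∂volume) < ⊤ := by
  have hp2' : p ≤ 2 := by linarith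
  set h : ℝ → ℝ≥0∞ := fun s => ENNReal.ofReal (2 * (1 + s ^ 2) ^ (-(p / 2))) with hh
  have hint : Integrable (fun s : ℝ => 2 * (1 + s ^ 2) ^ (-(p / 2))) volume := by
    have h1 : ((Module.finrank ℝ ℝ : ℝ)) < p := by simpa using hp1
    have h2 := (integrable_rpow_neg_one_add_norm_sq (E := ℝ) (μ := volume) h1).const_mul 2
    simpa [Real.norm_eq_abs, sq_abs, neg_div] using h2
  have hC : (∫⁻ s : ℝ, h s ∂volume) < ⊤ := hint.lintegral_lt_top
  have hfin : (volume : Measure (EuclideanSpace ℝ (Fin 3))).toSphere univ *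
      (∫⁻ s : ℝ, h s ∂volume) < ⊤ :=
    ENNReal.mul_lt_top (measure_lt_top _ _) hC
  refine lt_of_le_of_lt (iSup_le fun y => ?_) hfin
  set R : ℝ := ‖y‖ with hR
  set g : ℝ → ℝ≥0∞ := fun r => ENNReal.ofReal
    ((1 + (r - R) ^ 2) ^ (-p) * (1 + r ^ 2) ^ (-(p / 2)) * (1 + R ^ 2) ^ (-(p / 2))) with hg
  have hgmeas : Measurable g := by
    apply Measurable.ennreal_ofReal
    fun_prop
  have heq : (∫⁻ x : EuclideanSpace ℝ (Fin 3),
      ENNReal.ofReal ((1 + (‖x‖ - ‖y‖) ^ 2) ^ (-p) *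
        (1 + ‖x‖ ^ 2) ^ (-(p / 2)) * (1 + ‖y‖ ^ 2) ^ (-(p / 2))) ∂volume)
      = ∫⁻ x : EuclideanSpace ℝ (Fin 3), g ‖x‖ ∂volume := rfl
  rw [heq, kernelK1_polar g hgmeas]
  refine mul_le_mul_right ?_ _
  calc ∫⁻ r in Ioi (0:ℝ), ENNReal.ofReal (r ^ 2) * g r ∂volume
      ≤ ∫⁻ r in Ioi (0:ℝ), h (r - R) ∂volume := by
        refine lintegral_mono fun r => ?_
        rw [hg, ← ENNReal.ofReal_mul (sq_nonneg r)]
        exact ENNReal.ofReal_le_ofReal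
          (kernelK1_key_pointwise p r R hp1.le hp2')
    _ ≤ ∫⁻ r : ℝ, h (r - R) ∂volume := setLIntegral_le_lintegral _ _
    _ = ∫⁻ s : ℝ, h s ∂volume := lintegral_sub_right_eq_self h R
end

section
/- For every p with 1 < p < 6/5, sup_{y ∈ ℝ³} ∫_{ℝ³} (1 + ||x| − |y||²)^{−p/2} · min( (1+|x|²)^{−1}, (1+|y|²)^{−1} )^{p} dx < ∞. Equivalently, with K₂(x,y) := ⟨|x| − |y|⟩^{−1} min(⟨x⟩^{−2}, ⟨y⟩^{−2}), one has sup_{y ∈ ℝ³} ‖K₂(·, y)‖_{L^p(ℝ³)} < ∞. -/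
/-!
Since `min(⟨x⟩⁻², ⟨y⟩⁻²) ≤ 1` and `p ≥ 1`, the integrand is at most `⟨|x| - |y|⟩^{-p} ⟨x⟩⁻²`.
In polar coordinates the weight `⟨x⟩⁻²` cancels the Jacobian `r²` up to a factor `≤ 1`, leaving
`∫ ⟨r - |y|⟩^{-p} dr`, which for `p > 1` is finite and independent of `y` by translation invariance.
-/

open MeasureTheory Real Set Metric Module

section Radial

variable {E : Type*} [NormedAddCommGroup E] [NormedSpace ℝ E] [Nontrivial E]
  [FiniteDimensional ℝ E] [MeasurableSpace E] [BorelSpace E]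
  (μ : Measure E) [μ.IsAddHaarMeasure]

theorem lintegral_ofReal_comp_norm_le {f g : ℝ → ℝ} (hf : Measurable f) (hf_nonneg : ∀ r, 0 ≤ f r)
    (hg : IntegrableOn g (Ioi 0)) (hfg : ∀ r ∈ Ioi (0 : ℝ), r ^ (finrank ℝ E - 1) * f r ≤ g r) :
    ∫⁻ x, ENNReal.ofReal (f ‖x‖) ∂μ ≤
      ENNReal.ofReal (finrank ℝ E * μ.real (ball 0 1) * ∫ r in Ioi 0, g r) := by
  have h_radial : IntegrableOn (fun r ↦ r ^ (finrank ℝ E - 1) * f r) (Ioi 0) := by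
    refine hg.mono' ((measurable_id.pow_const _).mul hf).aestronglyMeasurable ?_
    filter_upwards [ae_restrict_mem measurableSet_Ioi] with r hr
    rw [Real.norm_of_nonneg (mul_nonneg (pow_nonneg (le_of_lt hr) _) (hf_nonneg r))]
    exact hfg r hr
  rw [← ofReal_integral_eq_lintegral_ofReal ((integrable_fun_norm_addHaar μ).2 h_radial)
    (ae_of_all _ fun x ↦ hf_nonneg ‖x‖), integral_fun_norm_addHaar, nsmul_eq_mul, smul_eq_mul,
    ← mul_assoc]
  exact ENNReal.ofReal_le_ofReal <| mul_le_mul_of_nonneg_left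
    (setIntegral_mono_on h_radial hg measurableSet_Ioi hfg) (by positivity)

end Radial

theorem integrable_one_add_sq_rpow_neg {p : ℝ} (hp : 1 < p) :
    Integrable fun s : ℝ ↦ (1 + s ^ 2) ^ (-(p / 2)) := by
  simpa [sq_abs, neg_div] using
    integrable_rpow_neg_one_add_norm_sq (E := ℝ) (μ := volume) (r := p) (by simpa using hp)

theorem setIntegral_Ioi_one_add_sub_sq_rpow_neg_le {p : ℝ} (hp : 1 < p) (c : ℝ) :
    ∫ r in Ioi 0, (1 + (r - c) ^ 2) ^ (-(p / 2)) ≤ ∫ s : ℝ, (1 + s ^ 2) ^ (-(p / 2)) := by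
  rw [← integral_sub_right_eq_self (fun s : ℝ ↦ (1 + s ^ 2) ^ (-(p / 2))) c]
  exact setIntegral_le_integral ((integrable_one_add_sq_rpow_neg hp).comp_sub_right c)
    (ae_of_all _ fun r ↦ by positivity)

theorem rpow_min_inv_one_add_sq_le {p : ℝ} (hp : 1 ≤ p) (a b : ℝ) :
    min (1 + a ^ 2)⁻¹ (1 + b ^ 2)⁻¹ ^ p ≤ (1 + a ^ 2)⁻¹ := by
  have h_le_one : min (1 + a ^ 2)⁻¹ (1 + b ^ 2)⁻¹ ≤ 1 :=
    (min_le_left _ _).trans (inv_le_one_of_one_le₀ (by nlinarith))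
  exact (rpow_le_self_of_le_one (by positivity) h_le_one hp).trans (min_le_left _ _)

theorem sq_mul_mul_inv_one_add_sq_le {c : ℝ} (hc : 0 ≤ c) (r : ℝ) :
    r ^ 2 * (c * (1 + r ^ 2)⁻¹) ≤ c := by
  rw [mul_left_comm, ← div_eq_mul_inv]
  exact mul_le_of_le_one_right hc ((div_le_one (by positivity)).2 (by linarith))

theorem kernel_K2_uniform_Lp_bound_general (p : ℝ) (hp1 : 1 < p) :
    (⨆ y : EuclideanSpace ℝ (Fin 3),
      ∫⁻ x : EuclideanSpace ℝ (Fin 3),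
        ENNReal.ofReal ((1 + (‖x‖ - ‖y‖) ^ 2) ^ (-(p / 2)) *
          (min ((1 + ‖x‖ ^ 2)⁻¹) ((1 + ‖y‖ ^ 2)⁻¹)) ^ p) ∂volume) < ⊤ := by
  set C := ∫ s : ℝ, (1 + s ^ 2) ^ (-(p / 2))
  refine (iSup_le fun y ↦ ?_).trans_lt (ENNReal.ofReal_lt_top
    (r := 3 * volume.real (ball (0 : EuclideanSpace ℝ (Fin 3)) 1) * C))
  set g : ℝ → ℝ := fun r ↦ (1 + (r - ‖y‖) ^ 2) ^ (-(p / 2))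
  have hg_nonneg : ∀ r, 0 ≤ g r := fun r ↦ by positivity
  calc _ ≤ ∫⁻ x : EuclideanSpace ℝ (Fin 3), ENNReal.ofReal (g ‖x‖ * (1 + ‖x‖ ^ 2)⁻¹) :=
        lintegral_mono fun x ↦ ENNReal.ofReal_le_ofReal <| mul_le_mul_of_nonneg_left
          (rpow_min_inv_one_add_sq_le hp1.le _ _) (hg_nonneg _)
    _ ≤ ENNReal.ofReal (3 * volume.real (ball (0 : EuclideanSpace ℝ (Fin 3)) 1) *
          ∫ r in Ioi 0, g r) := by
      have h_dim : finrank ℝ (EuclideanSpace ℝ (Fin 3)) = 3 := finrank_euclideanSpace_fin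
      have := lintegral_ofReal_comp_norm_le (E := EuclideanSpace ℝ (Fin 3)) volume
        (f := fun r ↦ g r * (1 + r ^ 2)⁻¹) (by fun_prop)
        (fun r ↦ mul_nonneg (hg_nonneg r) (by positivity))
        ((integrable_one_add_sq_rpow_neg hp1).comp_sub_right ‖y‖).integrableOn
        (fun r _ ↦ by simpa [h_dim] using sq_mul_mul_inv_one_add_sq_le (hg_nonneg r) r)
      simpa [h_dim] using this
    _ ≤ _ := by
      gcongr
      exact setIntegral_Ioi_one_add_sub_sq_rpow_neg_le hp1 ‖y‖

/-- Estimate (3.47) for the kernel `K₂(x,y) = ⟨|x|−|y|⟩⁻¹ min(⟨x⟩⁻², ⟨y⟩⁻²)`: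
its `L^p(ℝ³)` norm in `x` is bounded uniformly in `y`, for `1 < p < 6/5`. -/
theorem kernel_K2_uniform_Lp_bound (p : ℝ) (hp1 : 1 < p) (hp2 : p < 6 / 5) :
    (⨆ y : EuclideanSpace ℝ (Fin 3),
      ∫⁻ x : EuclideanSpace ℝ (Fin 3),
        ENNReal.ofReal ((1 + (‖x‖ - ‖y‖) ^ 2) ^ (-(p / 2)) *
          (min ((1 + ‖x‖ ^ 2)⁻¹) ((1 + ‖y‖ ^ 2)⁻¹)) ^ p) ∂volume) < ⊤ :=
  kernel_K2_uniform_Lp_bound_general p hp1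
end

section
/- Let K : ℝ³ × ℝ³ → ℂ be measurable and satisfy, for a.e. (x,y), |K(x,y)| ≤ ⟨|x| − |y|⟩^{−2} ⟨x⟩^{−1} ⟨y⟩^{−1} + ⟨|x| − |y|⟩^{−1} min(⟨x⟩^{−2}, ⟨y⟩^{−2}). Then for every q with 6 < q < ∞ there is a constant C_q (independent of K and f) such that for every f ∈ L^q(ℝ³) and a.e. x ∈ ℝ³, | ∫_{ℝ³} K(x,y) f(y) dy | ≤ C_q ‖f‖_{L^q(ℝ³)}; that is, the integral operator with kernel K is bounded from L^q(ℝ³) to L^∞(ℝ³). -/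
/-!
Write `R = ‖x‖`, `r = ‖y‖`. Peetre's inequality `⟨r⟩ ≤ √2 ⟨R - r⟩ ⟨R⟩` reduces the kernel bound
to `3 ⟨R - r⟩⁻¹ ⟨r⟩⁻²`. For `p ≥ 1`, integrating its `p`-th power in polar coordinates, the
volume factor `r²` is absorbed by `⟨r⟩⁻²`, which leaves `3ᵖ ∫ ⟨R - r⟩⁻ᵖ dr ≤ 3ᵖ ∫ ⟨s⟩⁻ᵖ ds`:
finite for `p > 1` and independent of `x`. Hölder's inequality with `p = q'` concludes.
-/

open MeasureTheory Real Set Metric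
open scoped ENNReal NNReal

namespace MeasureTheory

theorem lintegral_fun_norm_addHaar {E : Type*} [NormedAddCommGroup E] [NormedSpace ℝ E]
    [Nontrivial E] [FiniteDimensional ℝ E] [MeasurableSpace E] [BorelSpace E]
    (μ : Measure E) [μ.IsAddHaarMeasure] {g : ℝ → ℝ≥0∞} (hg : Measurable g) :
    ∫⁻ x, g ‖x‖ ∂μ = μ.toSphere univ *
      ∫⁻ r in Ioi (0 : ℝ), ENNReal.ofReal (r ^ (Module.finrank ℝ E - 1)) * g r := by
  have hg' : Measurable fun r : Ioi (0 : ℝ) ↦ g r := hg.comp measurable_subtype_coe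
  calc ∫⁻ x, g ‖x‖ ∂μ = ∫⁻ x : ({0}ᶜ : Set E), g ‖(x : E)‖ ∂(μ.comap (↑)) := by
        rw [lintegral_subtype_comap (measurableSet_singleton _).compl fun x ↦ g ‖x‖,
          restrict_compl_singleton]
    _ = ∫⁻ x, g x.2 ∂μ.toSphere.prod (.volumeIoiPow (Module.finrank ℝ E - 1)) := by
        simpa using μ.measurePreserving_homeomorphUnitSphereProd.lintegral_comp_emb
          (Homeomorph.measurableEmbedding _) (g ∘ Subtype.val ∘ Prod.snd)
    _ = μ.toSphere univ * ∫⁻ r, g r ∂.volumeIoiPow (Module.finrank ℝ E - 1) := by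
        rw [lintegral_prod (fun x : sphere (0 : E) 1 × Ioi (0 : ℝ) ↦ g x.2)
          (hg'.comp measurable_snd).aemeasurable]
        simp [lintegral_const, mul_comm]
    _ = _ := by
        rw [Measure.volumeIoiPow, lintegral_withDensity_eq_lintegral_mul _ (by fun_prop) hg',
          ← lintegral_subtype_comap measurableSet_Ioi]
        rfl

theorem enorm_integral_mul_le_eLpNorm_mul_eLpNorm {α 𝕜 : Type*} [MeasurableSpace α]
    {μ : Measure α} [NormedRing 𝕜] [NormedSpace ℝ 𝕜] {p q : ℝ≥0∞} [p.HolderConjugate q]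
    {k f : α → 𝕜} (hk : AEStronglyMeasurable k μ) (hf : AEStronglyMeasurable f μ) :
    ‖∫ y, k y * f y ∂μ‖ₑ ≤ eLpNorm k p μ * eLpNorm f q μ :=
  calc ‖∫ y, k y * f y ∂μ‖ₑ ≤ eLpNorm (fun y ↦ k y * f y) 1 μ := by
        rw [eLpNorm_one_eq_lintegral_enorm]
        exact enorm_integral_le_lintegral_enorm _
    _ ≤ eLpNorm k p μ * eLpNorm f q μ := by
        simpa using eLpNorm_le_eLpNorm_mul_eLpNorm_of_nnnorm hk hf (· * ·) 1
          (.of_forall fun _ ↦ by simpa using nnnorm_mul_le _ _)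

end MeasureTheory

lemma lintegral_const_mul_rpow_neg_one_add_sq_lt_top (c : ℝ) {p : ℝ} (hp : 1 < p) :
    ∫⁻ s : ℝ, ENNReal.ofReal (c * (1 + s ^ 2) ^ (-p / 2)) < ∞ := by
  have h := (integrable_rpow_neg_one_add_norm_sq (E := ℝ) (μ := volume)
    (by simpa using hp)).const_mul c
  simp only [norm_eq_abs, sq_abs] at h
  exact h.lintegral_lt_top

lemma one_add_sq_le_two_mul_one_add_sq_mul (R r : ℝ) :
    1 + r ^ 2 ≤ 2 * (1 + (R - r) ^ 2) * (1 + R ^ 2) := by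
  nlinarith [sq_nonneg (R - 2 * (R - r)), mul_nonneg (sq_nonneg R) (sq_nonneg (R - r))]

lemma rpow_neg_half_eq_inv_sqrt {x : ℝ} (hx : 0 ≤ x) : x ^ (-(1 / 2 : ℝ)) = (√x)⁻¹ := by
  rw [rpow_neg hx, sqrt_eq_rpow]

lemma pow_le_one_add_sq {r : ℝ} (hr : 0 ≤ r) {k : ℕ} (hk : k ≤ 2) : r ^ k ≤ 1 + r ^ 2 := by
  interval_cases k <;> nlinarith

noncomputable def kernelMajorant (R r : ℝ) : ℝ :=
  (1 + (R - r) ^ 2) ^ (-(1 : ℝ)) * (1 + R ^ 2) ^ (-(1 / 2 : ℝ)) * (1 + r ^ 2) ^ (-(1 / 2 : ℝ)) +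
    (1 + (R - r) ^ 2) ^ (-(1 / 2 : ℝ)) * min ((1 + R ^ 2)⁻¹) ((1 + r ^ 2)⁻¹)

lemma kernelMajorant_nonneg (R r : ℝ) : 0 ≤ kernelMajorant R r := by
  unfold kernelMajorant; positivity

lemma measurable_kernelMajorant (R : ℝ) : Measurable (kernelMajorant R) := by
  unfold kernelMajorant; fun_prop

lemma kernelMajorant_le (R r : ℝ) :
    kernelMajorant R r ≤ 3 * ((1 + (R - r) ^ 2) ^ (-(1 / 2 : ℝ)) * (1 + r ^ 2)⁻¹) := by
  obtain ⟨A, hA1, hA⟩ : ∃ A : ℝ, 1 ≤ A ∧ 1 + (R - r) ^ 2 = A ^ 2 :=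
    ⟨_, one_le_sqrt.2 (by nlinarith), (sq_sqrt (by positivity)).symm⟩
  obtain ⟨B, hB1, hB⟩ : ∃ B : ℝ, 1 ≤ B ∧ 1 + R ^ 2 = B ^ 2 :=
    ⟨_, one_le_sqrt.2 (by nlinarith), (sq_sqrt (by positivity)).symm⟩
  obtain ⟨C, hC1, hC⟩ : ∃ C : ℝ, 1 ≤ C ∧ 1 + r ^ 2 = C ^ 2 :=
    ⟨_, one_le_sqrt.2 (by nlinarith), (sq_sqrt (by positivity)).symm⟩
  have hA0 : 0 < A := by linarith
  have hB0 : 0 < B := by linarith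
  have hC0 : 0 < C := by linarith
  have hCAB : C ≤ 2 * A * B := by
    have := one_add_sq_le_two_mul_one_add_sq_mul R r
    rw [hA, hB, hC] at this
    nlinarith [mul_pos hA0 hB0]
  have h₁ : (A ^ 2)⁻¹ * B⁻¹ * C⁻¹ ≤ 2 * (A⁻¹ * (C ^ 2)⁻¹) := by
    field_simp
    nlinarith [mul_pos hA0 hC0]
  have h₂ : A⁻¹ * min (B ^ 2)⁻¹ (C ^ 2)⁻¹ ≤ A⁻¹ * (C ^ 2)⁻¹ := by
    gcongr
    exact min_le_right _ _
  unfold kernelMajorant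
  rw [hA, hB, hC, rpow_neg_one, rpow_neg_half_eq_inv_sqrt (by positivity),
    rpow_neg_half_eq_inv_sqrt (by positivity), rpow_neg_half_eq_inv_sqrt (by positivity),
    sqrt_sq hA0.le, sqrt_sq hB0.le, sqrt_sq hC0.le]
  linarith

lemma one_add_sq_mul_kernelMajorant_rpow_le {p : ℝ} (hp : 1 ≤ p) (R r : ℝ) :
    (1 + r ^ 2) * kernelMajorant R r ^ p ≤ 3 ^ p * (1 + (R - r) ^ 2) ^ (-p / 2) := by
  have hc : 1 ≤ 1 + r ^ 2 := by nlinarith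
  have hc' : (1 + r ^ 2)⁻¹ ^ p ≤ (1 + r ^ 2)⁻¹ := by
    simpa using rpow_le_rpow_of_exponent_ge (by positivity) (inv_le_one_of_one_le₀ hc) hp
  calc (1 + r ^ 2) * kernelMajorant R r ^ p
      ≤ (1 + r ^ 2) * (3 * ((1 + (R - r) ^ 2) ^ (-(1 / 2 : ℝ)) * (1 + r ^ 2)⁻¹)) ^ p := by
        gcongr
        exacts [kernelMajorant_nonneg R r, kernelMajorant_le R r]
    _ = 3 ^ p * (1 + (R - r) ^ 2) ^ (-p / 2) * ((1 + r ^ 2) * (1 + r ^ 2)⁻¹ ^ p) := by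
        rw [mul_rpow (by norm_num) (by positivity), mul_rpow (by positivity) (by positivity),
          ← rpow_mul (by positivity)]
        ring_nf
    _ ≤ 3 ^ p * (1 + (R - r) ^ 2) ^ (-p / 2) * ((1 + r ^ 2) * (1 + r ^ 2)⁻¹) := by gcongr
    _ = 3 ^ p * (1 + (R - r) ^ 2) ^ (-p / 2) := by
        rw [mul_inv_cancel₀ (by positivity), mul_one]

section KernelNorms

variable {E : Type*} [NormedAddCommGroup E] [NormedSpace ℝ E] [Nontrivial E]
  [FiniteDimensional ℝ E] [MeasurableSpace E] [BorelSpace E]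
  (μ : Measure E) [μ.IsAddHaarMeasure] (hE : Module.finrank ℝ E ≤ 3) {p : ℝ} (hp : 1 ≤ p)
include hE hp

theorem lintegral_kernelMajorant_rpow_le (x : E) :
    ∫⁻ y, ENNReal.ofReal (kernelMajorant ‖x‖ ‖y‖) ^ p ∂μ ≤
      μ.toSphere univ * ∫⁻ s : ℝ, ENNReal.ofReal (3 ^ p * (1 + s ^ 2) ^ (-p / 2)) := by
  rw [lintegral_fun_norm_addHaar μ ((measurable_kernelMajorant ‖x‖).ennreal_ofReal.pow_const p)]
  gcongr μ.toSphere univ * ?_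
  calc ∫⁻ r in Ioi (0 : ℝ), ENNReal.ofReal (r ^ (Module.finrank ℝ E - 1)) *
        ENNReal.ofReal (kernelMajorant ‖x‖ r) ^ p
      ≤ ∫⁻ r in Ioi (0 : ℝ), ENNReal.ofReal (3 ^ p * (1 + (‖x‖ - r) ^ 2) ^ (-p / 2)) := by
        refine setLIntegral_mono' measurableSet_Ioi fun r (hr : 0 < r) ↦ ?_
        rw [ENNReal.ofReal_rpow_of_nonneg (kernelMajorant_nonneg _ _) (by linarith),
          ← ENNReal.ofReal_mul (by positivity)]
        refine ENNReal.ofReal_le_ofReal ((mul_le_mul_of_nonneg_right ?_ ?_).trans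
          (one_add_sq_mul_kernelMajorant_rpow_le hp ‖x‖ r))
        · exact pow_le_one_add_sq hr.le (by omega)
        · exact rpow_nonneg (kernelMajorant_nonneg _ _) _
    _ ≤ ∫⁻ r, ENNReal.ofReal (3 ^ p * (1 + (‖x‖ - r) ^ 2) ^ (-p / 2)) :=
        setLIntegral_le_lintegral _ _
    _ = ∫⁻ s, ENNReal.ofReal (3 ^ p * (1 + s ^ 2) ^ (-p / 2)) :=
        lintegral_sub_left_eq_self (fun s ↦ ENNReal.ofReal (3 ^ p * (1 + s ^ 2) ^ (-p / 2))) ‖x‖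

theorem eLpNorm_le_of_norm_le_kernelMajorant {F : Type*} [NormedAddCommGroup F] {x : E}
    {k : E → F} (hk : ∀ᵐ y ∂μ, ‖k y‖ ≤ kernelMajorant ‖x‖ ‖y‖) :
    eLpNorm k (ENNReal.ofReal p) μ ≤ (μ.toSphere univ *
      ∫⁻ s : ℝ, ENNReal.ofReal (3 ^ p * (1 + s ^ 2) ^ (-p / 2))) ^ (1 / p) := by
  refine (eLpNorm_mono_ae_real hk).trans ?_
  rw [eLpNorm_eq_lintegral_rpow_enorm_toReal (ENNReal.ofReal_pos.2 (by linarith)).ne'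
      ENNReal.ofReal_ne_top,
    ENNReal.toReal_ofReal (by linarith)]
  gcongr
  simpa only [Real.enorm_eq_ofReal (kernelMajorant_nonneg _ _)] using
    lintegral_kernelMajorant_rpow_le μ hE hp x

end KernelNorms

/-- `L^q → L^∞` boundedness (Step 2 of the proof of Theorem 3.4) of an integral operator
whose kernel satisfies the pointwise bound
`|K(x,y)| ≤ ⟨|x|−|y|⟩⁻² ⟨x⟩⁻¹ ⟨y⟩⁻¹ + ⟨|x|−|y|⟩⁻¹ min(⟨x⟩⁻², ⟨y⟩⁻²)`, for `6 < q < ∞`. -/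
theorem kernel_op_Lq_to_Linfty (q : ℝ) (hq1 : 6 < q) :
    ∃ C : ℝ, 0 < C ∧
      ∀ K : EuclideanSpace ℝ (Fin 3) → EuclideanSpace ℝ (Fin 3) → ℂ,
        Measurable (Function.uncurry K) →
        (∀ᵐ z : EuclideanSpace ℝ (Fin 3) × EuclideanSpace ℝ (Fin 3) ∂volume,
          ‖K z.1 z.2‖ ≤
            ((1 + (‖z.1‖ - ‖z.2‖) ^ 2) ^ (-(1 : ℝ))) * (1 + ‖z.1‖ ^ 2) ^ (-(1 / 2 : ℝ)) *
              (1 + ‖z.2‖ ^ 2) ^ (-(1 / 2 : ℝ)) +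
            ((1 + (‖z.1‖ - ‖z.2‖) ^ 2) ^ (-(1 / 2 : ℝ))) *
              min ((1 + ‖z.1‖ ^ 2)⁻¹) ((1 + ‖z.2‖ ^ 2)⁻¹)) →
        ∀ f : EuclideanSpace ℝ (Fin 3) → ℂ, MemLp f (ENNReal.ofReal q) volume →
          ∀ᵐ x : EuclideanSpace ℝ (Fin 3) ∂volume,
            (‖∫ y, K x y * f y‖₊ : ℝ≥0∞)
              ≤ ENNReal.ofReal C * eLpNorm f (ENNReal.ofReal q) volume := by
  have hpq := (Real.HolderConjugate.conjExponent (p := q) (by linarith)).symm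
  have := hpq.ennrealOfReal
  set p := q.conjExponent
  set M : ℝ≥0∞ := ((volume : Measure (EuclideanSpace ℝ (Fin 3))).toSphere univ *
    ∫⁻ s : ℝ, ENNReal.ofReal (3 ^ p * (1 + s ^ 2) ^ (-p / 2))) ^ (1 / p)
  have hM : M ≠ ∞ := ENNReal.rpow_ne_top_of_nonneg (one_div_nonneg.2 hpq.nonneg) <|
    ENNReal.mul_ne_top (measure_ne_top _ _)
      (lintegral_const_mul_rpow_neg_one_add_sq_lt_top (3 ^ p) hpq.lt).ne
  refine ⟨M.toReal + 1, by positivity, fun K hK hKb f hf ↦ ?_⟩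
  rw [Measure.volume_eq_prod] at hKb
  filter_upwards [Measure.ae_ae_of_ae_prod hKb] with x hx
  have hKx : eLpNorm (K x) (ENNReal.ofReal p) volume ≤ M :=
    eLpNorm_le_of_norm_le_kernelMajorant volume (by simp) hpq.lt.le hx
  calc ‖∫ y, K x y * f y‖ₑ
      ≤ eLpNorm (K x) (ENNReal.ofReal p) volume * eLpNorm f (ENNReal.ofReal q) volume :=
        enorm_integral_mul_le_eLpNorm_mul_eLpNorm
          (hK.comp measurable_prodMk_left).aestronglyMeasurable hf.1
    _ ≤ ENNReal.ofReal (M.toReal + 1) * eLpNorm f (ENNReal.ofReal q) volume := by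
        gcongr
        exact hKx.trans ((ENNReal.le_ofReal_iff_toReal_le hM (by positivity)).2 (by linarith))
end
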